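/- Assume the MAXBET model with m > 4‖W‖√r. Let (O_1,…,O_m) be a candidate critical point of the OTSM problem satisfying Assumption 1, chosen so that ΘᵀO is symmetric positive semidefinite, where O ∈ ℝ^{D×r} stacks O_1,…,O_m. Then: (i) ‖O − Θ‖_F ≤ 4‖W‖√(r/m); (ii) ‖ΘᵀO − m·I_r‖ ≤ 4‖W‖√r; (iii) max_{1≤i≤m}‖[WO]_i‖_F ≤ max_{1≤i≤m}‖[WΘ]_i‖_F + 4‖W‖²√(r/m); and (iv) max_{1≤i≤m}‖O_i − Θ_i‖_F ≤ 2(max_{1≤i≤m}‖[WΘ]_i‖_F + 4‖W‖²√(r/m)) / (m − 4‖W‖√r). -/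

import Mathlib

open Matrix BigOperators MeasureTheory ProbabilityTheory

noncomputable section

/-- The index type of a `D × D` block matrix with blocks of sizes `d 0, …, d (m-1)`. -/
abbrev Idx {m : ℕ} (d : Fin m → ℕ) := (i : Fin m) × Fin (d i)

/-- The `(i,j)` block of a `D × D` matrix. -/
def blk {m : ℕ} {d : Fin m → ℕ} (S : Matrix (Idx d) (Idx d) ℝ) (i j : Fin m) :
    Matrix (Fin (d i)) (Fin (d j)) ℝ :=
  Matrix.of fun a b => S ⟨i, a⟩ ⟨j, b⟩

/-- The `i`-th `d i × r` block of a `D × r` matrix. -/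
def rblk {m r : ℕ} {d : Fin m → ℕ} (V : Matrix (Idx d) (Fin r) ℝ) (i : Fin m) :
    Matrix (Fin (d i)) (Fin r) ℝ :=
  Matrix.of fun a c => V ⟨i, a⟩ c

/-- Stacking matrices `O i ∈ ℝ^{d i × r}` into a `D × r` matrix. -/
def stack {m r : ℕ} {d : Fin m → ℕ} (O : ∀ i, Matrix (Fin (d i)) (Fin r) ℝ) :
    Matrix (Idx d) (Fin r) ℝ :=
  Matrix.of fun p c => O p.1 p.2 c

/-- Semi-orthogonality: `Oᵀ O = I`. -/
def SemiOrth {n r : ℕ} (O : Matrix (Fin n) (Fin r) ℝ) : Prop := Oᵀ * O = 1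

/-- Frobenius norm of a real matrix. -/
def frobNorm {α β : Type*} [Fintype α] [Fintype β] (A : Matrix α β ℝ) : ℝ :=
  Real.sqrt (∑ a, ∑ b, (A a b) ^ 2)

/-- Spectral (ℓ₂ operator) norm of a real matrix. -/
def specNorm {α β : Type*} [Fintype α] [Fintype β] [DecidableEq β] (A : Matrix α β ℝ) : ℝ :=
  ‖LinearMap.toContinuousLinearMap (Matrix.toEuclideanLin A)‖

/-- The OTSM objective `∑ i j, tr(Oᵢᵀ S_{ij} O_j)`. -/
def objVal {m r : ℕ} {d : Fin m → ℕ} (S : Matrix (Idx d) (Idx d) ℝ)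
    (O : ∀ i, Matrix (Fin (d i)) (Fin r) ℝ) : ℝ :=
  ∑ i, ∑ j, Matrix.trace ((O i)ᵀ * blk S i j * O j)

/-- Feasibility for the SDP relaxation. -/
def SDPFeasible {m : ℕ} {d : Fin m → ℕ} (r : ℕ) (U : Matrix (Idx d) (Idx d) ℝ) : Prop :=
  U.PosSemidef ∧ (∀ i, ((1 : Matrix (Fin (d i)) (Fin (d i)) ℝ) - blk U i i).PosSemidef) ∧
    ∀ i, Matrix.trace (blk U i i) = (r : ℝ)

/-- `U` solves the SDP relaxation. -/
def IsSDPSol {m : ℕ} {d : Fin m → ℕ} (r : ℕ) (S U : Matrix (Idx d) (Idx d) ℝ) : Prop :=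
  SDPFeasible r U ∧ ∀ U', SDPFeasible r U' → Matrix.trace (S * U') ≤ Matrix.trace (S * U)

/-- Feasibility for the rank-constrained problem. -/
def RankFeasible {m : ℕ} {d : Fin m → ℕ} (r : ℕ) (U : Matrix (Idx d) (Idx d) ℝ) : Prop :=
  SDPFeasible r U ∧ U.rank = r

/-- `U` solves the rank-constrained problem. -/
def IsRankSol {m : ℕ} {d : Fin m → ℕ} (r : ℕ) (S U : Matrix (Idx d) (Idx d) ℝ) : Prop :=
  RankFeasible r U ∧ ∀ U', RankFeasible r U' → Matrix.trace (S * U') ≤ Matrix.trace (S * U)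

/-- The MAXBET model: `S_{ij} = Θ_i Θ_jᵀ + W_{ij}` with `W` symmetric. -/
def MAXBET {m r : ℕ} {d : Fin m → ℕ} (S W : Matrix (Idx d) (Idx d) ℝ)
    (Θ : ∀ i, Matrix (Fin (d i)) (Fin r) ℝ) : Prop :=
  W.IsSymm ∧ ∀ i j, blk S i j = Θ i * (Θ j)ᵀ + blk W i j

/-- The MAXDIFF model: `S_{ii} = 0`, `S_{ij} = Θ_i Θ_jᵀ + W_{ij}` for `i ≠ j`,
`W` symmetric with `W_{ii} = 0`. -/
def MAXDIFF {m r : ℕ} {d : Fin m → ℕ} (S W : Matrix (Idx d) (Idx d) ℝ)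
    (Θ : ∀ i, Matrix (Fin (d i)) (Fin r) ℝ) : Prop :=
  W.IsSymm ∧ (∀ i, blk W i i = 0) ∧ (∀ i, blk S i i = 0) ∧
    ∀ i j, i ≠ j → blk S i j = Θ i * (Θ j)ᵀ + blk W i j

/-- The Lagrange multiplier `Λ_i = O_iᵀ (∑ j, S_{ij} O_j)`. -/
def lagrange {m r : ℕ} {d : Fin m → ℕ} (S : Matrix (Idx d) (Idx d) ℝ)
    (O : ∀ i, Matrix (Fin (d i)) (Fin r) ℝ) (i : Fin m) : Matrix (Fin r) (Fin r) ℝ :=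
  (O i)ᵀ * ∑ j, blk S i j * O j

/-- `(O_1, …, O_m)` is a critical point of the OTSM problem. -/
def IsCritical {m r : ℕ} {d : Fin m → ℕ} (S : Matrix (Idx d) (Idx d) ℝ)
    (O : ∀ i, Matrix (Fin (d i)) (Fin r) ℝ) : Prop :=
  (∀ i, SemiOrth (O i)) ∧
    ∀ i, (lagrange S O i).IsSymm ∧ O i * lagrange S O i = ∑ j, blk S i j * O j

/-- `(O_1, …, O_m)` is a candidate critical point of the OTSM problem. -/
def IsCandidate {m r : ℕ} {d : Fin m → ℕ} (S : Matrix (Idx d) (Idx d) ℝ)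
    (O : ∀ i, Matrix (Fin (d i)) (Fin r) ℝ) : Prop :=
  IsCritical S O ∧ ∀ i, (lagrange S O i).PosSemidef

/-- Assumption 1: `tr(Θᵀ S Θ) ≤ tr(Oᵀ S O)`. -/
def Assumption1 {m r : ℕ} {d : Fin m → ℕ} (S : Matrix (Idx d) (Idx d) ℝ)
    (Θ O : ∀ i, Matrix (Fin (d i)) (Fin r) ℝ) : Prop :=
  Matrix.trace ((stack Θ)ᵀ * S * stack Θ) ≤ Matrix.trace ((stack O)ᵀ * S * stack O)

/-- `Θ`-discordance of a noise matrix `W`. -/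
def Discordant {m r : ℕ} {d : Fin m → ℕ} (Θ : ∀ i, Matrix (Fin (d i)) (Fin r) ℝ)
    (W : Matrix (Idx d) (Idx d) ℝ) : Prop :=
  W.IsSymm ∧ specNorm W ≤ 3 * Real.sqrt (∑ i, (d i : ℝ)) ∧
    ∀ i, frobNorm (rblk (W * stack Θ) i) ≤
      3 * Real.sqrt ((∑ i, (d i : ℝ)) * r * Real.log m)

/-- The deterministic noise condition (3.1) of Theorem 3.1. -/
def DetCond31 {m r : ℕ} {d : Fin m → ℕ} (Θ : ∀ i, Matrix (Fin (d i)) (Fin r) ℝ)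
    (W : Matrix (Idx d) (Idx d) ℝ) : Prop :=
  specNorm W * (4 * Real.sqrt r + 1) + 1 < (m : ℝ) ∧
  4 * m * ((⨆ i, frobNorm (rblk (W * stack Θ) i)) + 4 * specNorm W ^ 2 * Real.sqrt ((r : ℝ) / m)) /
        ((m : ℝ) - specNorm W * (4 * Real.sqrt r + 1) - 1) +
      2 * ((⨆ i, frobNorm (rblk (W * stack Θ) i)) + 4 * specNorm W ^ 2 * Real.sqrt ((r : ℝ) / m)) +
      8 * specNorm W * Real.sqrt ((r : ℝ) / m) + 2 * specNorm W < (m : ℝ)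

/-- The deterministic noise condition (3.4) of Theorem 3.2. -/
def DetCond32 {m r : ℕ} {d : Fin m → ℕ} (Θ : ∀ i, Matrix (Fin (d i)) (Fin r) ℝ)
    (W : Matrix (Idx d) (Idx d) ℝ) : Prop :=
  4 * specNorm W * Real.sqrt r < (m : ℝ) ∧
  specNorm W * (4 * Real.sqrt r + 1) +
      ((⨆ i, frobNorm (rblk (W * stack Θ) i)) + 4 * specNorm W ^ 2 * Real.sqrt ((r : ℝ) / m)) +
      2 * m * ((⨆ i, frobNorm (rblk (W * stack Θ) i)) + 4 * specNorm W ^ 2 * Real.sqrt ((r : ℝ) / m)) /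
        ((m : ℝ) - 4 * specNorm W * Real.sqrt r) +
      16 * specNorm W ^ 2 * (r : ℝ) / m ≤ (m : ℝ)

/-- The "upper triangular" order on block indices. -/
def upTri {m : ℕ} {d : Fin m → ℕ} (a b : Idx d) : Prop :=
  a.1 < b.1 ∨ (a.1 = b.1 ∧ (a.2 : ℕ) ≤ (b.2 : ℕ))

/-!
Write `T`, `V` for the stacked `Θ`, `O`, so that `TᵀT = VᵀV = m • 1`, and put `P = TᵀV`,
`X = V - T`. Since `P` is symmetric, `m • 1 - P = XᵀX / 2 ⪰ 0`, whence `‖P‖_F² ≤ m tr P` and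
`m ‖X‖_F² = 2m²r - 2m tr P ≤ 2 (m²r - ‖P‖_F²)`. With `S = TTᵀ + W`, Assumption 1 bounds the last
term by `2 (tr(VᵀWV) - tr(TᵀWT)) ≤ 4 ‖W‖ √(mr) ‖X‖_F`, which is (i). Then `P - m • 1 = TᵀX` gives
(ii) and `WV = WT + WX` gives (iii). For (iv), the identity `O_i Λ_i = Θ_i P + [WO]_i`, the
candidate condition `Λ_i ⪰ 0` and the gap `P ⪰ (m - 4‖W‖√r) • 1` coming from (ii) are all
tested against `X_iᵀX_i` with `X_i = O_i - Θ_i`.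
-/

section FrobNorm

variable {α β γ : Type*} [Fintype α] [Fintype β] [Fintype γ]

lemma frobNorm_eq_norm_vec (A : Matrix α β ℝ) : frobNorm A = ‖WithLp.toLp 2 A.vec‖ := by
  rw [EuclideanSpace.norm_eq, frobNorm, Fintype.sum_prod_type_right]
  simp [Matrix.vec]

lemma frobNorm_nonneg (A : Matrix α β ℝ) : 0 ≤ frobNorm A := Real.sqrt_nonneg _

lemma frobNorm_sq (A : Matrix α β ℝ) : frobNorm A ^ 2 = (Aᵀ * A).trace := by
  rw [frobNorm, Real.sq_sqrt (by positivity), ← Matrix.vec_dotProduct_vec, dotProduct,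
    Fintype.sum_prod_type_right]
  simp [Matrix.vec, sq]

lemma trace_transpose_mul_eq_inner (A B : Matrix α β ℝ) :
    (Aᵀ * B).trace = inner ℝ (WithLp.toLp 2 A.vec) (WithLp.toLp 2 B.vec) := by
  rw [← Matrix.vec_dotProduct_vec, EuclideanSpace.inner_eq_star_dotProduct]
  simp [dotProduct_comm]

lemma abs_trace_transpose_mul_le (A B : Matrix α β ℝ) :
    |(Aᵀ * B).trace| ≤ frobNorm A * frobNorm B := by
  rw [trace_transpose_mul_eq_inner, frobNorm_eq_norm_vec, frobNorm_eq_norm_vec]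
  exact abs_real_inner_le_norm _ _

lemma frobNorm_add_le (A B : Matrix α β ℝ) : frobNorm (A + B) ≤ frobNorm A + frobNorm B := by
  simpa only [frobNorm_eq_norm_vec, Matrix.vec_add, WithLp.toLp_add] using norm_add_le _ _

end FrobNorm

section SpecNorm

open scoped Matrix.Norms.L2Operator

variable {α β γ : Type*} [Fintype α] [Fintype β] [Fintype γ]

lemma specNorm_eq_norm [DecidableEq β] (A : Matrix α β ℝ) : specNorm A = ‖A‖ := rfl

lemma specNorm_nonneg [DecidableEq β] (A : Matrix α β ℝ) : 0 ≤ specNorm A := norm_nonneg _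

lemma specNorm_mul_le [DecidableEq β] [DecidableEq γ] (A : Matrix α β ℝ)
    (B : Matrix β γ ℝ) :
    specNorm (A * B) ≤ specNorm A * specNorm B :=
  Matrix.l2_opNorm_mul A B

lemma specNorm_transpose [DecidableEq α] [DecidableEq β] (A : Matrix α β ℝ) :
    specNorm Aᵀ = specNorm A :=
  Matrix.l2_opNorm_conjTranspose A

lemma specNorm_le_sqrt_of_transpose_mul_self_eq [DecidableEq β] {V : Matrix α β ℝ} {c : ℝ}
    (hc : 0 ≤ c) (hV : Vᵀ * V = c • 1) : specNorm V ≤ √c := by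
  have hone : ‖(1 : Matrix β β ℝ)‖ ≤ 1 := by
    rw [← Matrix.diagonal_one, Matrix.l2_opNorm_diagonal]
    exact pi_norm_le_iff_of_nonneg zero_le_one |>.mpr fun _ => by simp
  have hsq : specNorm V * specNorm V ≤ c := by
    rw [specNorm_eq_norm, ← Matrix.l2_opNorm_conjTranspose_mul_self,
      Matrix.conjTranspose_eq_transpose_of_trivial, hV, norm_smul, Real.norm_of_nonneg hc]
    exact mul_le_of_le_one_right hc hone
  exact Real.le_sqrt_of_sq_le (by nlinarith)

lemma specNorm_le_frobNorm [DecidableEq β] (A : Matrix α β ℝ) : specNorm A ≤ frobNorm A := by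
  refine ContinuousLinearMap.opNorm_le_bound _ (frobNorm_nonneg A) fun x => ?_
  refine le_of_sq_le_sq ?_ (mul_nonneg (frobNorm_nonneg A) (norm_nonneg x))
  rw [mul_pow, frobNorm, Real.sq_sqrt (by positivity), EuclideanSpace.norm_sq_eq,
    EuclideanSpace.norm_sq_eq, Finset.sum_mul]
  refine Finset.sum_le_sum fun a _ => ?_
  simpa [Matrix.toEuclideanLin, Matrix.mulVec, dotProduct, sq_abs] using
    Finset.sum_mul_sq_le_sq_mul_sq Finset.univ (A a) x

lemma abs_dotProduct_mulVec_le [DecidableEq β] (Q : Matrix β β ℝ) (x : β → ℝ) :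
    |x ⬝ᵥ Q *ᵥ x| ≤ specNorm Q * (x ⬝ᵥ x) := by
  have hx : x ⬝ᵥ x = ‖WithLp.toLp 2 x‖ ^ 2 := by
    rw [EuclideanSpace.norm_sq_eq]; simp [dotProduct, sq]
  have hQx : x ⬝ᵥ Q *ᵥ x = inner ℝ (WithLp.toLp 2 x) (WithLp.toLp 2 (Q *ᵥ x)) := by
    simp [EuclideanSpace.inner_eq_star_dotProduct, dotProduct_comm]
  rw [hx, hQx, sq, ← mul_assoc]
  refine (abs_real_inner_le_norm _ _).trans ?_
  rw [mul_comm]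
  exact mul_le_mul_of_nonneg_right (Matrix.l2_opNorm_mulVec Q _) (norm_nonneg _)

end SpecNorm

section PosSemidef

open scoped Matrix.Norms.L2Operator

variable {α β γ : Type*} [Fintype α] [Fintype β] [Fintype γ] [DecidableEq β]

lemma posSemidef_add_smul_one_of_specNorm_le {A : Matrix β β ℝ} (hA : A.IsSymm) {δ : ℝ}
    (h : specNorm A ≤ δ) : (A + δ • 1).PosSemidef := by
  refine Matrix.PosSemidef.of_dotProduct_mulVec_nonneg ?_ fun x => ?_
  · exact Matrix.isHermitian_iff_isSymm.mpr (hA.add (Matrix.isSymm_one.smul δ))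
  · have hx : 0 ≤ x ⬝ᵥ x := Finset.sum_nonneg fun i _ => mul_self_nonneg (x i)
    have := neg_abs_le (x ⬝ᵥ A *ᵥ x) |>.trans' (neg_le_neg (abs_dotProduct_mulVec_le A x))
    simp only [star_trivial, Matrix.add_mulVec, dotProduct_add, Matrix.smul_mulVec,
      Matrix.one_mulVec, dotProduct_smul, smul_eq_mul]
    nlinarith [specNorm_nonneg A]

lemma posSemidef_sub_smul_one_of_specNorm_sub_le {P : Matrix β β ℝ} (hP : P.IsSymm) {μ δ : ℝ}
    (h : specNorm (P - μ • 1) ≤ δ) : (P - (μ - δ) • 1).PosSemidef := by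
  rw [sub_smul, sub_sub_eq_add_sub, add_sub_right_comm]
  exact posSemidef_add_smul_one_of_specNorm_le (hP.sub (Matrix.isSymm_one.smul μ)) h

lemma Matrix.PosSemidef.trace_mul_nonneg {A B : Matrix β β ℝ} (hA : A.PosSemidef)
    (hB : B.PosSemidef) : 0 ≤ (A * B).trace := by
  open scoped MatrixOrder in
  obtain ⟨C, rfl⟩ : ∃ C : Matrix β β ℝ, A = Cᴴ * C :=
    ⟨CFC.sqrt A, by
      rw [(CFC.sqrt_nonneg A).posSemidef.1.eq, CFC.sqrt_mul_sqrt_self A hA.nonneg]⟩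
  rw [Matrix.mul_assoc, Matrix.trace_mul_comm]
  exact (hB.mul_mul_conjTranspose_same C).trace_nonneg

lemma frobNorm_mul_le (A : Matrix α β ℝ) (V : Matrix β γ ℝ) :
    frobNorm (A * V) ≤ specNorm A * frobNorm V := by
  have hgap : (-(Aᵀ * A) + specNorm A ^ 2 • 1).PosSemidef := by
    refine posSemidef_add_smul_one_of_specNorm_le (by simp [Matrix.IsSymm]) ?_
    rw [specNorm_eq_norm, norm_neg, ← Matrix.conjTranspose_eq_transpose_of_trivial,
      Matrix.l2_opNorm_conjTranspose_mul_self, sq, specNorm_eq_norm]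
  have hVV : (V * Vᵀ).PosSemidef := by
    simpa [Matrix.conjTranspose_eq_transpose_of_trivial] using
      Matrix.posSemidef_self_mul_conjTranspose V
  have := hgap.trace_mul_nonneg hVV
  refine le_of_sq_le_sq ?_ (mul_nonneg (specNorm_nonneg A) (frobNorm_nonneg V))
  rw [mul_pow, frobNorm_sq, frobNorm_sq, Matrix.transpose_mul, Matrix.mul_assoc,
    Matrix.trace_mul_comm, Matrix.mul_assoc, Matrix.trace_mul_comm Vᵀ]
  simpa [Matrix.add_mul, Matrix.trace_add, Matrix.trace_smul, Matrix.mul_assoc] using this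

end PosSemidef

lemma mul_le_of_mul_sq_le_mul {a b x : ℝ} (hb : 0 ≤ b) (hx : 0 ≤ x)
    (h : a * x ^ 2 ≤ b * x) : a * x ≤ b := by
  rcases hx.eq_or_lt with rfl | hx
  · simpa using hb
  · exact le_of_mul_le_mul_right (by linarith) hx

section Frames

variable {ι κ : Type*} [Fintype ι] [Fintype κ]

lemma trace_transpose_mul_mul_comm (a b : Matrix ι κ ℝ) {L : Matrix κ κ ℝ} (hL : L.IsSymm) :
    (aᵀ * b * L).trace = (bᵀ * a * L).trace := by
  rw [← Matrix.trace_transpose, Matrix.transpose_mul, Matrix.transpose_mul, hL.eq,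
    Matrix.transpose_transpose, Matrix.trace_mul_comm]

lemma trace_sub_transpose_mul_sub_mul [DecidableEq κ] {a b : Matrix ι κ ℝ} {c : ℝ}
    (ha : aᵀ * a = c • 1) (hb : bᵀ * b = c • 1) {L : Matrix κ κ ℝ} (hL : L.IsSymm) :
    ((b - a)ᵀ * (b - a) * L).trace = 2 * c * L.trace - 2 * (aᵀ * b * L).trace := by
  have hcomm := trace_transpose_mul_mul_comm a b hL
  simp only [Matrix.transpose_sub, Matrix.sub_mul, Matrix.mul_sub, ha, hb, Matrix.trace_sub,
    Matrix.smul_mul, Matrix.one_mul, Matrix.trace_smul, smul_eq_mul, hcomm]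
  ring

lemma frobNorm_eq_sqrt_of_transpose_mul_self_eq [DecidableEq κ] {V : Matrix ι κ ℝ} {c : ℝ}
    (hV : Vᵀ * V = c • 1) : frobNorm V = √(c * Fintype.card κ) := by
  rw [← Real.sqrt_sq (frobNorm_nonneg V), frobNorm_sq, hV, Matrix.trace_smul, Matrix.trace_one,
    smul_eq_mul]

lemma trace_conj_mul_transpose_add (T V : Matrix ι κ ℝ) (W : Matrix ι ι ℝ) :
    (Vᵀ * (T * Tᵀ + W) * V).trace = frobNorm (Tᵀ * V) ^ 2 + (Vᵀ * W * V).trace := by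
  rw [frobNorm_sq, Matrix.transpose_mul, Matrix.transpose_transpose, Matrix.mul_add,
    Matrix.add_mul, Matrix.trace_add]
  simp only [Matrix.mul_assoc]

lemma trace_conj_sub_trace_conj_le [DecidableEq ι] (T V : Matrix ι κ ℝ)
    (W : Matrix ι ι ℝ) :
    (Vᵀ * W * V).trace - (Tᵀ * W * T).trace ≤
      specNorm W * (frobNorm V + frobNorm T) * frobNorm (V - T) := by
  have hsplit : Vᵀ * W * V - Tᵀ * W * T = (V - T)ᵀ * (W * V) + Tᵀ * (W * (V - T)) := by
    simp only [Matrix.transpose_sub, Matrix.sub_mul, Matrix.mul_sub, Matrix.mul_assoc]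
    abel
  have h₁ := (abs_trace_transpose_mul_le (V - T) (W * V)).trans
    (mul_le_mul_of_nonneg_left (frobNorm_mul_le W V) (frobNorm_nonneg _))
  have h₂ := (abs_trace_transpose_mul_le T (W * (V - T))).trans
    (mul_le_mul_of_nonneg_left (frobNorm_mul_le W (V - T)) (frobNorm_nonneg _))
  rw [← Matrix.trace_sub, hsplit, Matrix.trace_add]
  linarith [le_abs_self ((V - T)ᵀ * (W * V)).trace, le_abs_self (Tᵀ * (W * (V - T))).trace]

lemma mul_frobNorm_sub_sq_le [DecidableEq κ] {T V : Matrix ι κ ℝ} {c : ℝ}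
    (hT : Tᵀ * T = c • 1) (hV : Vᵀ * V = c • 1) (hP : (Tᵀ * V).PosSemidef) :
    c * frobNorm (V - T) ^ 2 ≤ 2 * (c ^ 2 * Fintype.card κ - frobNorm (Tᵀ * V) ^ 2) := by
  have hPs : (Tᵀ * V).IsSymm := Matrix.isHermitian_iff_isSymm.mp hP.1
  have hX : frobNorm (V - T) ^ 2 = 2 * c * Fintype.card κ - 2 * (Tᵀ * V).trace := by
    simpa [frobNorm_sq] using trace_sub_transpose_mul_sub_mul hT hV Matrix.isSymm_one
  have hXP := trace_sub_transpose_mul_sub_mul hT hV hPs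
  have hnonneg := (Matrix.posSemidef_conjTranspose_mul_self (V - T)).trace_mul_nonneg hP
  rw [Matrix.conjTranspose_eq_transpose_of_trivial, hXP] at hnonneg
  rw [hX, frobNorm_sq (Tᵀ * V), hPs.eq]
  nlinarith

theorem frobNorm_sub_le_of_trace_conj_le [DecidableEq ι] [DecidableEq κ] {T V : Matrix ι κ ℝ}
    {c : ℝ} (hc : 0 < c) (hT : Tᵀ * T = c • 1) (hV : Vᵀ * V = c • 1) (hP : (Tᵀ * V).PosSemidef)
    (W : Matrix ι ι ℝ)
    (h : (Tᵀ * (T * Tᵀ + W) * T).trace ≤ (Vᵀ * (T * Tᵀ + W) * V).trace) :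
    frobNorm (V - T) ≤ 4 * specNorm W * √(Fintype.card κ / c) := by
  set n : ℝ := (Fintype.card κ : ℝ)
  have hTT : frobNorm (Tᵀ * T) ^ 2 = c ^ 2 * n := by
    rw [frobNorm_sq, hT]
    simp only [Matrix.transpose_smul, Matrix.transpose_one, Matrix.smul_mul, Matrix.one_mul,
      Matrix.trace_smul, Matrix.trace_one, smul_eq_mul, n]
    ring
  have hroot : √(c * n) = c * √(n / c) := by
    rw [show c * n = c ^ 2 * (n / c) by field_simp, Real.sqrt_mul (sq_nonneg c),
      Real.sqrt_sq hc.le]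
  have hsq := mul_frobNorm_sub_sq_le hT hV hP
  have hnoise := trace_conj_sub_trace_conj_le T V W
  rw [trace_conj_mul_transpose_add, trace_conj_mul_transpose_add, hTT] at h
  rw [frobNorm_eq_sqrt_of_transpose_mul_self_eq hT, frobNorm_eq_sqrt_of_transpose_mul_self_eq hV,
    hroot] at hnoise
  have key : c * frobNorm (V - T) ≤ c * (4 * specNorm W * √(n / c)) := by
    refine mul_le_of_mul_sq_le_mul (by positivity [specNorm_nonneg W]) (frobNorm_nonneg _) ?_
    nlinarith
  exact le_of_mul_le_mul_left key hc

lemma specNorm_transpose_mul_sub_smul_one_le [DecidableEq ι] [DecidableEq κ] {T : Matrix ι κ ℝ}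
    {c : ℝ} (hc : 0 ≤ c) (hT : Tᵀ * T = c • 1) (V : Matrix ι κ ℝ) :
    specNorm (Tᵀ * V - c • 1) ≤ √c * frobNorm (V - T) := by
  rw [← hT, ← Matrix.mul_sub]
  calc specNorm (Tᵀ * (V - T)) ≤ specNorm Tᵀ * specNorm (V - T) := specNorm_mul_le _ _
    _ ≤ √c * frobNorm (V - T) := by
      rw [specNorm_transpose]
      exact mul_le_mul (specNorm_le_sqrt_of_transpose_mul_self_eq hc hT)
        (specNorm_le_frobNorm _) (specNorm_nonneg _) (Real.sqrt_nonneg c)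

theorem mul_frobNorm_sub_le_of_mul_eq [DecidableEq κ] {a b R : Matrix ι κ ℝ} (ha : aᵀ * a = 1)
    (hb : bᵀ * b = 1) {P Λ : Matrix κ κ ℝ} {μ : ℝ} (hP : (P - μ • 1).PosSemidef) (hΛ : Λ.PosSemidef)
    (hbΛ : b * Λ = a * P + R) :
    μ * frobNorm (b - a) ≤ 2 * frobNorm R := by
  have ha' : aᵀ * a = (1 : ℝ) • 1 := by rw [one_smul, ha]
  have hb' : bᵀ * b = (1 : ℝ) • 1 := by rw [one_smul, hb]
  have hΛs := Matrix.isHermitian_iff_isSymm.mp hΛ.1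
  have hPs : P.IsSymm := by
    simpa using (Matrix.isHermitian_iff_isSymm.mp hP.1).add (Matrix.isSymm_one.smul μ)
  have hXX : ((b - a)ᵀ * (b - a)).PosSemidef := by
    simpa using Matrix.posSemidef_conjTranspose_mul_self (b - a)
  have hΛtest := hXX.trace_mul_nonneg hΛ
  have hPtest := hXX.trace_mul_nonneg hP
  rw [trace_sub_transpose_mul_sub_mul ha' hb' hΛs] at hΛtest
  rw [Matrix.mul_sub, Matrix.trace_sub, trace_sub_transpose_mul_sub_mul ha' hb' hPs,
    Matrix.mul_smul, Matrix.mul_one, Matrix.trace_smul, ← frobNorm_sq, smul_eq_mul] at hPtest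
  have hΛa : (aᵀ * b * Λ).trace = P.trace + (aᵀ * R).trace := by
    rw [Matrix.mul_assoc, hbΛ, Matrix.mul_add, ← Matrix.mul_assoc, ha, Matrix.one_mul,
      Matrix.trace_add]
  have hΛb : Λ.trace = (bᵀ * a * P).trace + (bᵀ * R).trace := by
    rw [← Matrix.one_mul Λ, ← hb, Matrix.mul_assoc, hbΛ, Matrix.mul_add, ← Matrix.mul_assoc,
      Matrix.trace_add]
  have hR : ((b - a)ᵀ * R).trace ≤ frobNorm (b - a) * frobNorm R :=
    (le_abs_self _).trans (abs_trace_transpose_mul_le _ _)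
  rw [Matrix.transpose_sub, Matrix.sub_mul, Matrix.trace_sub] at hR
  refine mul_le_of_mul_sq_le_mul (by positivity [frobNorm_nonneg R]) (frobNorm_nonneg _) ?_
  rw [trace_transpose_mul_mul_comm a b hPs] at hPtest
  linarith

end Frames

section Blocks

variable {m r : ℕ} {d : Fin m → ℕ}

lemma stack_transpose_mul_stack (U V : ∀ i, Matrix (Fin (d i)) (Fin r) ℝ) :
    (stack U)ᵀ * stack V = ∑ i, (U i)ᵀ * V i := by
  ext c c'
  rw [Matrix.mul_apply, ← Finset.univ_sigma_univ, Finset.sum_sigma]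
  simp [Matrix.sum_apply, Matrix.mul_apply, stack]

lemma stack_transpose_mul_self {U : ∀ i, Matrix (Fin (d i)) (Fin r) ℝ}
    (hU : ∀ i, SemiOrth (U i)) : (stack U)ᵀ * stack U = (m : ℝ) • 1 := by
  simp only [stack_transpose_mul_stack, show ∀ i, (U i)ᵀ * U i = 1 from hU, Finset.sum_const,
    Finset.card_univ, Fintype.card_fin]
  exact (Nat.cast_smul_eq_nsmul ℝ m 1).symm

lemma rblk_mul_stack (W : Matrix (Idx d) (Idx d) ℝ) (V : ∀ i, Matrix (Fin (d i)) (Fin r) ℝ)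
    (i : Fin m) : rblk (W * stack V) i = ∑ j, blk W i j * V j := by
  ext a c
  change (W * stack V) ⟨i, a⟩ c = _
  rw [Matrix.mul_apply, ← Finset.univ_sigma_univ, Finset.sum_sigma]
  simp [Matrix.sum_apply, Matrix.mul_apply, stack, blk]

lemma frobNorm_rblk_le (V : Matrix (Idx d) (Fin r) ℝ) (i : Fin m) :
    frobNorm (rblk V i) ≤ frobNorm V := by
  refine Real.sqrt_le_sqrt ?_
  rw [← Finset.univ_sigma_univ, Finset.sum_sigma]
  exact Finset.single_le_sum (f := fun j => ∑ a, ∑ c, V ⟨j, a⟩ c ^ 2)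
    (fun j _ => by positivity) (Finset.mem_univ i)

lemma frobNorm_rblk_mul_le (W : Matrix (Idx d) (Idx d) ℝ) (T V : Matrix (Idx d) (Fin r) ℝ)
    (i : Fin m) :
    frobNorm (rblk (W * V) i) ≤ frobNorm (rblk (W * T) i) + specNorm W * frobNorm (V - T) := by
  have hsplit : rblk (W * V) i = rblk (W * T) i + rblk (W * (V - T)) i := by
    ext a c
    simp [rblk, Matrix.mul_sub]
  rw [hsplit]
  refine (frobNorm_add_le _ _).trans ?_
  gcongr
  exact (frobNorm_rblk_le _ i).trans (frobNorm_mul_le W (V - T))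

namespace MAXBET

variable {S W : Matrix (Idx d) (Idx d) ℝ} {Θ : ∀ i, Matrix (Fin (d i)) (Fin r) ℝ}

lemma eq_add (h : MAXBET S W Θ) : S = stack Θ * (stack Θ)ᵀ + W := by
  ext ⟨i, a⟩ ⟨j, b⟩
  have hij := congrFun (congrFun (h.2 i j) a) b
  simp only [blk, Matrix.of_apply, Matrix.add_apply] at hij
  simp [hij, Matrix.mul_apply, stack]

lemma sum_blk_mul (h : MAXBET S W Θ) (O : ∀ i, Matrix (Fin (d i)) (Fin r) ℝ) (i : Fin m) :
    ∑ j, blk S i j * O j = Θ i * ((stack Θ)ᵀ * stack O) + rblk (W * stack O) i := by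
  simp only [h.2, Matrix.add_mul, Finset.sum_add_distrib, Matrix.mul_assoc, ← Matrix.mul_sum,
    stack_transpose_mul_stack, rblk_mul_stack]

end MAXBET

end Blocks

theorem candidate_error_estimates_general {m r : ℕ}
    {d : Fin m → ℕ}
    (Θ : ∀ i, Matrix (Fin (d i)) (Fin r) ℝ) (hΘ : ∀ i, SemiOrth (Θ i))
    (S W : Matrix (Idx d) (Idx d) ℝ) (hmodel : MAXBET S W Θ)
    (hmgt : 4 * specNorm W * Real.sqrt r < (m : ℝ))
    (O : ∀ i, Matrix (Fin (d i)) (Fin r) ℝ)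
    (hcand : IsCandidate S O) (hass : Assumption1 S Θ O)
    (hpsd : ((stack Θ)ᵀ * stack O).PosSemidef) :
    frobNorm (stack O - stack Θ) ≤ 4 * specNorm W * Real.sqrt ((r : ℝ) / m) ∧
    specNorm ((stack Θ)ᵀ * stack O - (m : ℝ) • (1 : Matrix (Fin r) (Fin r) ℝ)) ≤
      4 * specNorm W * Real.sqrt r ∧
    (⨆ i, frobNorm (rblk (W * stack O) i)) ≤
      (⨆ i, frobNorm (rblk (W * stack Θ) i)) + 4 * specNorm W ^ 2 * Real.sqrt ((r : ℝ) / m) ∧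
    (⨆ i, frobNorm (O i - Θ i)) ≤
      2 * ((⨆ i, frobNorm (rblk (W * stack Θ) i)) +
          4 * specNorm W ^ 2 * Real.sqrt ((r : ℝ) / m)) /
        ((m : ℝ) - 4 * specNorm W * Real.sqrt r) := by
  obtain ⟨⟨hO, hcrit⟩, hΛ⟩ := hcand
  have hm : (0 : ℝ) < m := lt_of_le_of_lt (by positivity [specNorm_nonneg W]) hmgt
  have : Nonempty (Fin m) := ⟨⟨0, by exact_mod_cast hm⟩⟩
  have hΘΘ := stack_transpose_mul_self hΘ
  have h1 : frobNorm (stack O - stack Θ) ≤ 4 * specNorm W * √(r / m) := by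
    rw [Assumption1, hmodel.eq_add] at hass
    simpa using frobNorm_sub_le_of_trace_conj_le hm hΘΘ (stack_transpose_mul_self hO) hpsd W hass
  have h2 : specNorm ((stack Θ)ᵀ * stack O - (m : ℝ) • 1) ≤ 4 * specNorm W * √r :=
    calc _ ≤ √m * frobNorm (stack O - stack Θ) :=
          specNorm_transpose_mul_sub_smul_one_le hm.le hΘΘ _
      _ ≤ √m * (4 * specNorm W * √(r / m)) := by gcongr
      _ = 4 * specNorm W * √r := by
          rw [mul_left_comm, ← Real.sqrt_mul hm.le, mul_div_cancel₀ _ hm.ne']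
  set M := (⨆ i, frobNorm (rblk (W * stack Θ) i)) + 4 * specNorm W ^ 2 * √(r / m)
  have h3 : ∀ i, frobNorm (rblk (W * stack O) i) ≤ M := by
    intro i
    have hΘi := le_ciSup (Finite.bddAbove_range fun j => frobNorm (rblk (W * stack Θ) j)) i
    have hX := mul_le_mul_of_nonneg_left h1 (specNorm_nonneg W)
    linarith [frobNorm_rblk_mul_le W (stack Θ) (stack O) i]
  have h4 : ∀ i, frobNorm (O i - Θ i) ≤ 2 * M / (m - 4 * specNorm W * √r) := by
    intro i
    have hgap :=
      posSemidef_sub_smul_one_of_specNorm_sub_le (Matrix.isHermitian_iff_isSymm.mp hpsd.1) h2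
    have := mul_frobNorm_sub_le_of_mul_eq (hΘ i) (hO i) hgap (hΛ i)
      ((hcrit i).2.trans (hmodel.sum_blk_mul O i))
    rw [le_div_iff₀ (sub_pos.2 hmgt)]
    linarith [h3 i]
  exact ⟨h1, h2, ciSup_le h3, ciSup_le h4⟩

/-- Lemma 5.4, MAXBET part: error estimates for a candidate critical point
satisfying Assumption 1, chosen so that `Θᵀ O` is symmetric positive semidefinite. -/
theorem candidate_error_estimates {m r : ℕ} (hm : 0 < m) (hr : 0 < r)
    {d : Fin m → ℕ} (hd : ∀ i, r ≤ d i)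
    (Θ : ∀ i, Matrix (Fin (d i)) (Fin r) ℝ) (hΘ : ∀ i, SemiOrth (Θ i))
    (S W : Matrix (Idx d) (Idx d) ℝ) (hmodel : MAXBET S W Θ)
    (hmgt : 4 * specNorm W * Real.sqrt r < (m : ℝ))
    (O : ∀ i, Matrix (Fin (d i)) (Fin r) ℝ)
    (hcand : IsCandidate S O) (hass : Assumption1 S Θ O)
    (hpsd : ((stack Θ)ᵀ * stack O).PosSemidef) :
    frobNorm (stack O - stack Θ) ≤ 4 * specNorm W * Real.sqrt ((r : ℝ) / m) ∧
    specNorm ((stack Θ)ᵀ * stack O - (m : ℝ) • (1 : Matrix (Fin r) (Fin r) ℝ)) ≤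
      4 * specNorm W * Real.sqrt r ∧
    (⨆ i, frobNorm (rblk (W * stack O) i)) ≤
      (⨆ i, frobNorm (rblk (W * stack Θ) i)) + 4 * specNorm W ^ 2 * Real.sqrt ((r : ℝ) / m) ∧
    (⨆ i, frobNorm (O i - Θ i)) ≤
      2 * ((⨆ i, frobNorm (rblk (W * stack Θ) i)) +
          4 * specNorm W ^ 2 * Real.sqrt ((r : ℝ) / m)) /
        ((m : ℝ) - 4 * specNorm W * Real.sqrt r) :=
  candidate_error_estimates_general Θ hΘ S W hmodel hmgt O hcand hass hpsd

end
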